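/- Fix ρ ∈ (0,1), and let γ(x) = x·log x + (1−x)·log(1−x). For probability-vector weights w_1, w_2 > 0 with w_1 + w_2 = 1 and values p_1 = ρ·q_1, p_2 = ρ·q_2 with 0 < q_1 ≠ q_2 and p_1, p_2 ∈ (0,1), define the merged value p̄ = w_1·p_1 + w_2·p_2. Then w_1·γ(p_1) + w_2·γ(p_2) − γ(p̄) ≥ c·ρ for some constant c > 0 depending only on q_1, q_2, w_1 (and not on ρ), for all sufficiently small ρ. -/

import Mathlib

/-!
Write `γ x = f x + f (1 - x)` with `f x = x log x`. Since `f (ρ q) = ρ f q + ρ q log ρ` and the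
`log ρ` terms are linear in `q`, the Jensen gap of `f` at the points `ρ q₁, ρ q₂` is exactly `ρ`
times its Jensen gap at `q₁, q₂`, which is positive by strict convexity of `f`. The Jensen gap of
`x ↦ f (1 - x)` is nonnegative by convexity, so `c` can be taken to be the gap of `f` at `q₁, q₂`.
-/

open Real

def jensenGap (f : ℝ → ℝ) (w₁ w₂ x y : ℝ) : ℝ :=
  w₁ * f x + w₂ * f y - f (w₁ * x + w₂ * y)

lemma jensenGap_add (f g : ℝ → ℝ) (w₁ w₂ x y : ℝ) :
    jensenGap (fun t => f t + g t) w₁ w₂ x y = jensenGap f w₁ w₂ x y + jensenGap g w₁ w₂ x y := by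
  unfold jensenGap
  ring

lemma jensenGap_comp_one_sub (f : ℝ → ℝ) {w₁ w₂ : ℝ} (hw : w₁ + w₂ = 1) (x y : ℝ) :
    jensenGap (fun t => f (1 - t)) w₁ w₂ x y = jensenGap f w₁ w₂ (1 - x) (1 - y) := by
  have : 1 - (w₁ * x + w₂ * y) = w₁ * (1 - x) + w₂ * (1 - y) := by linear_combination -hw
  simp only [jensenGap, this]

lemma ConvexOn.jensenGap_nonneg {s : Set ℝ} {f : ℝ → ℝ} (hf : ConvexOn ℝ s f) {x y w₁ w₂ : ℝ}
    (hx : x ∈ s) (hy : y ∈ s) (hw₁ : 0 ≤ w₁) (hw₂ : 0 ≤ w₂) (hw : w₁ + w₂ = 1) :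
    0 ≤ jensenGap f w₁ w₂ x y :=
  sub_nonneg.2 (hf.2 hx hy hw₁ hw₂ hw)

lemma StrictConvexOn.jensenGap_pos {s : Set ℝ} {f : ℝ → ℝ} (hf : StrictConvexOn ℝ s f)
    {x y w₁ w₂ : ℝ} (hx : x ∈ s) (hy : y ∈ s) (hxy : x ≠ y) (hw₁ : 0 < w₁) (hw₂ : 0 < w₂)
    (hw : w₁ + w₂ = 1) :
    0 < jensenGap f w₁ w₂ x y :=
  sub_pos.2 (hf.2 hx hy hxy hw₁ hw₂ hw)

lemma Real.mul_log_mul_left (ρ x : ℝ) :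
    ρ * x * log (ρ * x) = ρ * (x * log x) + ρ * x * log ρ := by
  rcases eq_or_ne ρ 0 with rfl | hρ
  · simp
  rcases eq_or_ne x 0 with rfl | hx
  · simp
  rw [log_mul hρ hx]
  ring

lemma jensenGap_mul_log_smul (ρ w₁ w₂ x y : ℝ) :
    jensenGap (fun t => t * log t) w₁ w₂ (ρ * x) (ρ * y)
      = ρ * jensenGap (fun t => t * log t) w₁ w₂ x y := by
  have hmid : w₁ * (ρ * x) + w₂ * (ρ * y) = ρ * (w₁ * x + w₂ * y) := by ring
  simp only [jensenGap, hmid, mul_log_mul_left]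
  ring

theorem jensen_gap_order_rho (γ : ℝ → ℝ)
    (hγ : ∀ x, γ x = x * Real.log x + (1 - x) * Real.log (1 - x))
    (q₁ q₂ w₁ w₂ : ℝ) (hq₁ : 0 < q₁) (hq₂ : 0 < q₂) (hne : q₁ ≠ q₂)
    (hw₁ : 0 < w₁) (hw₁' : w₁ < 1) (hw₂ : w₂ = 1 - w₁) :
    ∃ c > (0 : ℝ), ∃ ρ₀ > (0 : ℝ), ∀ ρ : ℝ, 0 < ρ → ρ < ρ₀ →
      ρ * q₁ < 1 → ρ * q₂ < 1 →
      c * ρ ≤ w₁ * γ (ρ * q₁) + w₂ * γ (ρ * q₂)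
        - γ (w₁ * (ρ * q₁) + w₂ * (ρ * q₂)) := by
  have hw : w₁ + w₂ = 1 := by linarith
  have hw₂pos : 0 < w₂ := by linarith
  have hγ' : γ = fun t => t * log t + (1 - t) * log (1 - t) := funext hγ
  refine ⟨jensenGap (fun t => t * log t) w₁ w₂ q₁ q₂,
    strictConvexOn_mul_log.jensenGap_pos hq₁.le hq₂.le hne hw₁ hw₂pos hw, 1, one_pos,
    fun ρ hρ _ h₁ h₂ => ?_⟩
  have hrest : 0 ≤ jensenGap (fun t => (1 - t) * log (1 - t)) w₁ w₂ (ρ * q₁) (ρ * q₂) := by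
    rw [jensenGap_comp_one_sub (fun t => t * log t) hw]
    exact convexOn_mul_log.jensenGap_nonneg (sub_nonneg.2 h₁.le) (sub_nonneg.2 h₂.le)
      hw₁.le hw₂pos.le hw
  change _ ≤ jensenGap γ w₁ w₂ (ρ * q₁) (ρ * q₂)
  rw [hγ', jensenGap_add, jensenGap_mul_log_smul]
  linarith
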